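/- arXiv:math/0410496 — 2 statements merged into one kernel-verified Lean document; each statement's English description precedes it below -/
import Mathlib

section
/- Let f : [0,∞) → ℝ be continuous and integrable on (0,∞), and suppose f is (k+1)-times continuously differentiable on a neighborhood of 0, where k ≥ 0 is an integer. Then the limit, as real q → k with q ∈ (k, k+1), of (1/Γ(−q)) ∫₀^∞ t^{−1−q}( f(t) − Σ_{j=0}^{k} (t^j/j!) f^{(j)}(0) ) dt exists and equals (−1)^k f^{(k)}(0). -/
/-!
Write `c_j = f^(j)(0) / j!` and `R` for the Taylor remainder of order `k`, and split the integral
at `1`. Since `R(t) = O(t^(k+1))` near `0`, `∫₀¹ t^(-1-q) R(t) dt` is continuous in `q < k + 1`;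
the part `∫₁^∞ t^(-1-q) f(t) dt` is continuous in `q > -1` because `f` is integrable; and the
monomial `c_j t^j` contributes exactly `-c_j / (q - j)` on `(1, ∞)`. So everything except the
monomial `j = k` stays bounded as `q → k⁺` and is killed by `1 / Γ(-q) → 0`. The reflection
formula gives `1 / Γ(-q) = -Γ(q+1) sin(πq) / π`, hence `(1 / Γ(-q)) / (q - k) → -(-1)^k k!`,
and the monomial `j = k` yields the limit `(-1)^k k! c_k`.
-/

open MeasureTheory Filter Set Topology Real

theorem ContDiffAt.exists_abs_sub_taylor_le {f : ℝ → ℝ} {n : ℕ} {x₀ : ℝ}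
    (hf : ContDiffAt ℝ (n + 1) f x₀) :
    ∃ C, ∀ᶠ t in 𝓝[≥] x₀, |f t - ∑ j ∈ Finset.range (n + 1),
      (t - x₀) ^ j * (iteratedDeriv j f x₀ / j.factorial)| ≤ C * (t - x₀) ^ (n + 1) := by
  obtain ⟨u, hu, hfu⟩ := hf.contDiffOn le_rfl (by simp)
  obtain ⟨δ, hδ, hball⟩ := Metric.mem_nhds_iff.1 hu
  have hsub : Icc x₀ (x₀ + δ / 2) ⊆ u := fun t ht =>
    hball (by rw [Metric.mem_ball, Real.dist_eq, abs_lt]; constructor <;> linarith [ht.1, ht.2])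
  obtain ⟨C, hC⟩ := exists_taylor_mean_remainder_bound (by linarith) (hfu.mono hsub)
  refine ⟨C, eventually_of_mem (Icc_mem_nhdsGE (show x₀ < x₀ + δ / 2 by linarith)) fun t ht => ?_⟩
  convert hC t ht using 3
  rw [taylor_within_apply, Real.norm_eq_abs]
  congr 2
  refine Finset.sum_congr rfl fun j hj => ?_
  rw [iteratedDerivWithin_eq_iteratedDeriv (uniqueDiffOn_Icc (by linarith))
    (hf.of_le (by exact_mod_cast (Finset.mem_range.1 hj).le)) (left_mem_Icc.2 (by linarith)),
    smul_eq_mul]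
  ring

theorem exists_abs_le_mul_pow_of_eventually {R : ℝ → ℝ} {a C : ℝ} {n : ℕ}
    (hR : ContinuousOn R (Ioc 0 a)) (h : ∀ᶠ t in 𝓝[>] 0, |R t| ≤ C * t ^ n) :
    ∃ C', ∀ t ∈ Ioc 0 a, |R t| ≤ C' * t ^ n := by
  obtain ⟨δ, hδ, hδR⟩ := mem_nhdsGT_iff_exists_Ioo_subset.1 h
  obtain ⟨M, hM⟩ := isCompact_Icc.exists_bound_of_continuousOn
    (hR.mono fun t (ht : t ∈ Icc δ a) => ⟨hδ.out.trans_le ht.1, ht.2⟩)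
  refine ⟨max C (max M 0 / δ ^ n), fun t ht => ?_⟩
  have htn : 0 ≤ t ^ n := pow_nonneg ht.1.le n
  rcases lt_or_ge t δ with htδ | hδt
  · exact (hδR ⟨ht.1, htδ⟩).trans (by gcongr; exact le_max_left _ _)
  · have hδn : 0 < δ ^ n := pow_pos hδ.out n
    calc |R t| ≤ max M 0 / δ ^ n * δ ^ n := by
          rw [div_mul_cancel₀ _ hδn.ne']; exact (hM t ⟨hδt, ht.2⟩).trans (le_max_left _ _)
      _ ≤ max C (max M 0 / δ ^ n) * t ^ n := by
          gcongr
          · exact le_max_right _ _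
          · exact hδ.out.le

theorem Real.one_div_Gamma_neg_eq_mul_sin {q : ℝ} (hq : ∀ m : ℕ, q ≠ m) (hq' : 0 < q + 1) :
    1 / Real.Gamma (-q) = -(Real.Gamma (q + 1) / π) * Real.sin (π * q) := by
  have hΓ : Real.Gamma (-q) ≠ 0 := Real.Gamma_ne_zero fun m h => hq m (by linarith)
  have hreflect := Real.Gamma_mul_Gamma_one_sub (-q)
  rw [show 1 - -q = q + 1 by ring, mul_neg, Real.sin_neg] at hreflect
  have hsin : Real.sin (π * q) ≠ 0 := by
    intro h
    rw [h, neg_zero, div_zero] at hreflect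
    exact mul_ne_zero hΓ (Real.Gamma_pos_of_pos hq').ne' hreflect
  field_simp
  rw [hreflect]
  field_simp

theorem Real.tendsto_one_div_Gamma_neg_div_sub_nat (k : ℕ) :
    Tendsto (fun q => 1 / Real.Gamma (-q) / (q - k)) (𝓝[>] (k : ℝ))
      (𝓝 (-((-1) ^ k * k.factorial))) := by
  have hsin : HasDerivAt (fun q => Real.sin (π * q)) (Real.cos (π * k) * π) k := by
    simpa using ((hasDerivAt_id (k : ℝ)).const_mul π).sin
  have hslope := (hasDerivAt_iff_tendsto_slope.1 hsin).mono_left (nhdsGT_le_nhdsNE _)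
  have hΓ : Tendsto (fun q : ℝ => Real.Gamma (q + 1)) (𝓝[>] (k : ℝ)) (𝓝 k.factorial) := by
    rw [← Real.Gamma_nat_eq_factorial]
    refine ((Real.differentiableAt_Gamma fun m => ?_).continuousAt.comp
      (continuous_add_const 1).continuousAt).tendsto.mono_left nhdsWithin_le_nhds
    linarith [(m.cast_nonneg : (0 : ℝ) ≤ m), (k.cast_nonneg : (0 : ℝ) ≤ k)]
  have hlim := ((hΓ.div_const π).neg).mul hslope
  rw [mul_comm π, Real.cos_nat_mul_pi] at hlim
  convert hlim.congr' _ using 2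
  · field_simp
  · filter_upwards [Ioo_mem_nhdsGT (show (k : ℝ) < k + 1 by linarith)] with q hq
    have hq_nat : ∀ m : ℕ, q ≠ m := by
      rintro m rfl
      obtain ⟨hkm, hmk⟩ := hq
      norm_cast at hkm hmk
      omega
    have hq₁ : 0 < q + 1 := by linarith [hq.1, k.cast_nonneg (α := ℝ)]
    rw [Real.one_div_Gamma_neg_eq_mul_sin hq_nat hq₁, slope_def_field, mul_comm π (k : ℝ),
      Real.sin_nat_mul_pi, sub_zero]
    ring

theorem Real.tendsto_one_div_Gamma_neg_mul_sub_div {G : ℝ → ℝ} {g : ℝ} (k : ℕ) (c : ℝ)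
    (hG : Tendsto G (𝓝[>] (k : ℝ)) (𝓝 g)) :
    Tendsto (fun q => 1 / Real.Gamma (-q) * (G q - c / (q - k))) (𝓝[>] (k : ℝ))
      (𝓝 ((-1) ^ k * k.factorial * c)) := by
  have hS := Real.tendsto_one_div_Gamma_neg_div_sub_nat k
  have hsub : Tendsto (fun q : ℝ => q - k) (𝓝[>] (k : ℝ)) (𝓝 0) :=
    (tendsto_sub_nhds_zero_iff.2 tendsto_id).mono_left nhdsWithin_le_nhds
  convert ((hsub.mul hS).mul hG).sub (hS.const_mul c) |>.congr' _ using 2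
  · ring
  · filter_upwards [self_mem_nhdsWithin] with q (hq : (k : ℝ) < q)
    field_simp [sub_ne_zero.2 hq.ne']

theorem norm_rpow_neg_one_sub_mul_le {t x C p q q₁ : ℝ} (ht₀ : 0 < t) (ht₁ : t ≤ 1) (hC : 0 ≤ C)
    (hx : |x| ≤ C * t ^ p) (hq : q ≤ q₁) : ‖t ^ (-1 - q) * x‖ ≤ C * t ^ (p - 1 - q₁) :=
  calc ‖t ^ (-1 - q) * x‖ ≤ t ^ (-1 - q) * (C * t ^ p) := by
        rw [norm_mul, Real.norm_of_nonneg (by positivity)]; gcongr; exact hx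
    _ = C * t ^ (p - 1 - q) := by rw [mul_left_comm, ← Real.rpow_add ht₀]; ring_nf
    _ ≤ C * t ^ (p - 1 - q₁) :=
        mul_le_mul_of_nonneg_left (Real.rpow_le_rpow_of_exponent_ge ht₀ ht₁ (by linarith)) hC

theorem norm_rpow_neg_one_sub_mul_le_norm {t x q : ℝ} (ht : 1 ≤ t) (hq : -1 ≤ q) :
    ‖t ^ (-1 - q) * x‖ ≤ ‖x‖ := by
  rw [norm_mul, Real.norm_of_nonneg (by positivity)]
  exact mul_le_of_le_one_left (norm_nonneg x)
    (Real.rpow_le_one_of_one_le_of_nonpos ht (by linarith))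

theorem aestronglyMeasurable_rpow_neg_one_sub_mul {R : ℝ → ℝ} {μ : Measure ℝ} (q : ℝ)
    (hR : AEStronglyMeasurable R μ) : AEStronglyMeasurable (fun t => t ^ (-1 - q) * R t) μ :=
  (measurable_id.pow_const _).aestronglyMeasurable.mul hR

theorem continuousAt_rpow_neg_one_sub_mul {t : ℝ} (x : ℝ) (ht : t ≠ 0) (q₀ : ℝ) :
    ContinuousAt (fun q => t ^ (-1 - q) * x) q₀ :=
  ((Real.continuousAt_const_rpow ht).comp (continuousAt_const.sub continuousAt_id)).mul
    continuousAt_const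

section NearZero

variable {R : ℝ → ℝ} {C p : ℝ}

theorem integrableOn_Ioc_rpow_neg_one_sub_mul {q : ℝ}
    (hR : AEStronglyMeasurable R (volume.restrict (Ioc 0 1)))
    (hbound : ∀ t ∈ Ioc (0 : ℝ) 1, |R t| ≤ C * t ^ p) (hq : q < p) :
    IntegrableOn (fun t => t ^ (-1 - q) * R t) (Ioc 0 1) := by
  have hC : 0 ≤ C := by simpa using (abs_nonneg _).trans (hbound 1 ⟨one_pos, le_rfl⟩)
  refine Integrable.mono' ?_ (aestronglyMeasurable_rpow_neg_one_sub_mul q hR)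
    ((ae_restrict_iff' measurableSet_Ioc).2 (ae_of_all _ fun t ht =>
      norm_rpow_neg_one_sub_mul_le ht.1 ht.2 hC (hbound t ht) le_rfl))
  exact ((intervalIntegrable_iff_integrableOn_Ioc_of_le zero_le_one).1
    (intervalIntegral.intervalIntegrable_rpow' (by linarith))).const_mul C

theorem continuousAt_integral_Ioc_rpow_neg_one_sub_mul {q₀ : ℝ}
    (hR : AEStronglyMeasurable R (volume.restrict (Ioc 0 1)))
    (hbound : ∀ t ∈ Ioc (0 : ℝ) 1, |R t| ≤ C * t ^ p) (hq₀ : q₀ < p) :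
    ContinuousAt (fun q => ∫ t in Ioc 0 1, t ^ (-1 - q) * R t) q₀ := by
  have hC : 0 ≤ C := by simpa using (abs_nonneg _).trans (hbound 1 ⟨one_pos, le_rfl⟩)
  obtain ⟨q₁, hq₀₁, hq₁p⟩ := exists_between hq₀
  refine continuousAt_of_dominated (bound := fun t => C * t ^ (p - 1 - q₁))
    (Eventually.of_forall fun q => aestronglyMeasurable_rpow_neg_one_sub_mul q hR) ?_ ?_
    ((ae_restrict_iff' measurableSet_Ioc).2 (ae_of_all _ fun t ht =>
      continuousAt_rpow_neg_one_sub_mul (R t) ht.1.ne' q₀))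
  · filter_upwards [eventually_le_nhds hq₀₁] with q hq
    exact (ae_restrict_iff' measurableSet_Ioc).2 (ae_of_all _ fun t ht =>
      norm_rpow_neg_one_sub_mul_le ht.1 ht.2 hC (hbound t ht) hq)
  · exact ((intervalIntegrable_iff_integrableOn_Ioc_of_le zero_le_one).1
      (intervalIntegral.intervalIntegrable_rpow' (by linarith))).const_mul C

end NearZero

section AtInfinity

variable {f : ℝ → ℝ}

theorem integrableOn_Ioi_one_rpow_neg_one_sub_mul {q : ℝ} (hf : IntegrableOn f (Ioi 1))
    (hq : -1 ≤ q) : IntegrableOn (fun t => t ^ (-1 - q) * f t) (Ioi 1) :=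
  hf.norm.mono' (aestronglyMeasurable_rpow_neg_one_sub_mul q hf.aestronglyMeasurable)
    ((ae_restrict_iff' measurableSet_Ioi).2 (ae_of_all _ fun _ ht =>
      norm_rpow_neg_one_sub_mul_le_norm (le_of_lt ht) hq))

theorem continuousAt_integral_Ioi_one_rpow_neg_one_sub_mul {q₀ : ℝ} (hf : IntegrableOn f (Ioi 1))
    (hq₀ : -1 < q₀) : ContinuousAt (fun q => ∫ t in Ioi 1, t ^ (-1 - q) * f t) q₀ :=
  continuousAt_of_dominated
    (Eventually.of_forall fun q =>
      aestronglyMeasurable_rpow_neg_one_sub_mul q hf.aestronglyMeasurable)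
    ((eventually_ge_nhds hq₀).mono fun _ hq => (ae_restrict_iff' measurableSet_Ioi).2
      (ae_of_all _ fun _ ht => norm_rpow_neg_one_sub_mul_le_norm (le_of_lt ht) hq))
    hf.norm
    ((ae_restrict_iff' measurableSet_Ioi).2 (ae_of_all _ fun _ ht =>
      continuousAt_rpow_neg_one_sub_mul _ (zero_lt_one.trans ht).ne' q₀))

end AtInfinity

theorem rpow_neg_one_sub_mul_pow_eqOn (q : ℝ) (j : ℕ) :
    EqOn (fun t : ℝ => t ^ (-1 - q) * t ^ j) (fun t => t ^ ((j : ℝ) - 1 - q)) (Ioi 0) := by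
  intro t ht
  simp only
  rw [← Real.rpow_add_natCast ht.out.ne']
  ring_nf

theorem integrableOn_Ioi_one_rpow_neg_one_sub_mul_pow {q : ℝ} {j : ℕ} (hj : (j : ℝ) < q) :
    IntegrableOn (fun t : ℝ => t ^ (-1 - q) * t ^ j) (Ioi 1) :=
  (integrableOn_Ioi_rpow_of_lt (by linarith) zero_lt_one).congr_fun
    ((rpow_neg_one_sub_mul_pow_eqOn q j).mono (Ioi_subset_Ioi zero_le_one)).symm measurableSet_Ioi

theorem integral_Ioi_one_rpow_neg_one_sub_mul_pow {q : ℝ} {j : ℕ} (hj : (j : ℝ) < q) :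
    ∫ t in Ioi (1 : ℝ), t ^ (-1 - q) * t ^ j = 1 / (q - j) := by
  rw [setIntegral_congr_fun measurableSet_Ioi
    ((rpow_neg_one_sub_mul_pow_eqOn q j).mono (Ioi_subset_Ioi zero_le_one)),
    integral_Ioi_rpow_of_lt (by linarith) zero_lt_one, Real.one_rpow,
    show (j : ℝ) - 1 - q + 1 = -(q - j) by ring, div_neg, neg_div, neg_neg]

theorem integral_Ioi_zero_rpow_neg_one_sub_mul_sub_sum {f : ℝ → ℝ} (c : ℕ → ℝ) {n : ℕ} {q : ℝ}
    (hf : IntegrableOn f (Ioi 1))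
    (hnear : IntegrableOn
      (fun t => t ^ (-1 - q) * (f t - ∑ j ∈ Finset.range n, t ^ j * c j)) (Ioc 0 1))
    (hq : (n : ℝ) - 1 < q) :
    ∫ t in Ioi 0, t ^ (-1 - q) * (f t - ∑ j ∈ Finset.range n, t ^ j * c j) =
      (∫ t in Ioc 0 1, t ^ (-1 - q) * (f t - ∑ j ∈ Finset.range n, t ^ j * c j)) +
        (∫ t in Ioi 1, t ^ (-1 - q) * f t) - ∑ j ∈ Finset.range n, c j / (q - j) := by
  have hjq : ∀ j ∈ Finset.range n, (j : ℝ) < q := fun j hj => by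
    have : (j : ℝ) + 1 ≤ n := by exact_mod_cast Finset.mem_range.1 hj
    linarith
  have hf_tail :=
    integrableOn_Ioi_one_rpow_neg_one_sub_mul hf (by linarith [n.cast_nonneg (α := ℝ)])
  have hpow : ∀ j ∈ Finset.range n, IntegrableOn (fun t => t ^ (-1 - q) * t ^ j * c j) (Ioi 1) :=
    fun j hj => (integrableOn_Ioi_one_rpow_neg_one_sub_mul_pow (hjq j hj)).mul_const (c j)
  have htail_eq : (fun t => t ^ (-1 - q) * (f t - ∑ j ∈ Finset.range n, t ^ j * c j)) =
      fun t => t ^ (-1 - q) * f t - ∑ j ∈ Finset.range n, t ^ (-1 - q) * t ^ j * c j := by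
    simp only [mul_sub, Finset.mul_sum, mul_assoc]
  have htail : ∫ t in Ioi 1, t ^ (-1 - q) * (f t - ∑ j ∈ Finset.range n, t ^ j * c j) =
      (∫ t in Ioi 1, t ^ (-1 - q) * f t) - ∑ j ∈ Finset.range n, c j / (q - j) := by
    rw [htail_eq, integral_sub hf_tail (integrable_finsetSum _ hpow), integral_finsetSum _ hpow]
    refine congrArg _ (Finset.sum_congr rfl fun j hj => ?_)
    rw [integral_mul_const, integral_Ioi_one_rpow_neg_one_sub_mul_pow (hjq j hj)]
    ring
  rw [← Ioc_union_Ioi_eq_Ioi zero_le_one, setIntegral_union (Ioc_disjoint_Ioi le_rfl)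
    measurableSet_Ioi hnear (htail_eq ▸ hf_tail.sub (integrable_finsetSum _ hpow)), htail,
    add_sub_assoc]

/-- Fractional derivatives of integer order recover the ordinary derivatives up to sign:
if `f` is continuous on `[0,∞)`, integrable on `(0,∞)`, and `(k+1)`-times continuously
differentiable near `0`, then
`(1/Γ(-q)) ∫₀^∞ t^{-1-q}(f(t) - Σ_{j=0}^{k} (t^j/j!) f^{(j)}(0)) dt → (-1)^k f^{(k)}(0)`
as `q → k`, `q ∈ (k, k+1)`. -/
theorem fracDeriv_tendsto_integer_order
    (k : ℕ) (f : ℝ → ℝ)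
    (hcont : ContinuousOn f (Set.Ici (0 : ℝ)))
    (hint : IntegrableOn f (Set.Ioi (0 : ℝ)) volume)
    (hsmooth : ∃ ε > (0 : ℝ), ContDiffOn ℝ (k + 1) f (Set.Ioo (-ε) ε)) :
    Tendsto
      (fun q : ℝ => (1 / Real.Gamma (-q)) *
        ∫ t in Set.Ioi (0 : ℝ), t ^ (-1 - q) *
          (f t - ∑ j ∈ Finset.range (k + 1),
            t ^ j / (Nat.factorial j) * iteratedDeriv j f 0))
      (nhdsWithin (k : ℝ) (Set.Ioo (k : ℝ) ((k : ℝ) + 1)))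
      (nhds ((-1 : ℝ) ^ k * iteratedDeriv k f 0)) := by
  obtain ⟨ε, hε, hf⟩ := hsmooth
  set c : ℕ → ℝ := fun j => iteratedDeriv j f 0 / j.factorial
  set P : ℝ → ℝ := fun t => ∑ j ∈ Finset.range (k + 1), t ^ j * c j
  obtain ⟨C₀, hC₀⟩ := (hf.contDiffAt (Ioo_mem_nhds (by linarith) hε)).exists_abs_sub_taylor_le
  obtain ⟨C, hC⟩ : ∃ C, ∀ t ∈ Ioc (0 : ℝ) 1, |f t - P t| ≤ C * t ^ ((k + 1 : ℕ) : ℝ) := by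
    simp only [Real.rpow_natCast]
    exact exists_abs_le_mul_pow_of_eventually
      ((hcont.mono (Ioc_subset_Ioi_self.trans Ioi_subset_Ici_self)).sub (by fun_prop))
      (by simpa using hC₀.filter_mono (nhdsWithin_mono _ Ioi_subset_Ici_self))
  have hR : AEStronglyMeasurable (fun t => f t - P t) (volume.restrict (Ioc 0 1)) :=
    (hint.mono_set Ioc_subset_Ioi_self).aestronglyMeasurable.sub (by fun_prop)
  have hf₁ : IntegrableOn f (Ioi 1) := hint.mono_set (Ioi_subset_Ioi zero_le_one)
  let G : ℝ → ℝ := fun q => (∫ t in Ioc 0 1, t ^ (-1 - q) * (f t - P t)) +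
    (∫ t in Ioi 1, t ^ (-1 - q) * f t) - ∑ j ∈ Finset.range k, c j / (q - j)
  have hG : ContinuousAt G k :=
    ((continuousAt_integral_Ioc_rpow_neg_one_sub_mul hR hC (by push_cast; linarith)).add
      (continuousAt_integral_Ioi_one_rpow_neg_one_sub_mul hf₁
        (by linarith [k.cast_nonneg (α := ℝ)]))).sub
      (tendsto_finsetSum _ fun j hj => continuousAt_const.div
        (continuousAt_id.sub continuousAt_const)
        (sub_ne_zero.2 (by exact_mod_cast (Finset.mem_range.1 hj).ne')))
  have hval : (-1) ^ k * k.factorial * c k = (-1) ^ k * iteratedDeriv k f 0 := by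
    simp only [c]; field_simp
  rw [nhdsWithin_Ioo_eq_nhdsGT (by linarith), ← hval]
  refine (Real.tendsto_one_div_Gamma_neg_mul_sub_div k (c k)
    (hG.tendsto.mono_left nhdsWithin_le_nhds)).congr' ?_
  filter_upwards [Ioo_mem_nhdsGT (show (k : ℝ) < k + 1 by linarith)] with q hq
  simp only [div_mul_eq_mul_div, mul_div_assoc]
  rw [integral_Ioi_zero_rpow_neg_one_sub_mul_sub_sum c hf₁
    (integrableOn_Ioc_rpow_neg_one_sub_mul hR hC (by push_cast; linarith [hq.2]))
    (by push_cast; linarith [hq.1]), Finset.sum_range_succ]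
  ring
end

section
/- Let n ≥ 5, let q ∈ (2, 3], set p = −n+q+2, let N > 0, let a_N be the unique positive root of 1 − t² − N t⁴ = 0, let f_N(t) = (1 − t² − N t⁴)^{1/(q+1)} for |t| ≤ a_N, and define A_N(t) = c_{n} ∫₀^{f_N(t)} (t² + r²)^{p/2} r^{n−2} dr for |t| ≤ a_N, where c_{n} is the surface area of the unit sphere S^{n−2} in ℝ^{n−1}. Then A_N(0) = c_{n}/(n+p−1) and A_N''(0) = c_{n} ( p/(n+p−3) − 2/(n+p−1) ), where A_N''(0) is the second derivative of A_N at 0. -/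
open MeasureTheory

/-- The surface area of the unit sphere `S^{m-1}` in `ℝ^m` (total mass of the
surface measure). -/
noncomputable def sphereArea (m : ℕ) : ℝ :=
  (((volume : Measure (EuclideanSpace ℝ (Fin m))).toSphere) Set.univ).toReal

/-- The profile function `f_N(t) = (1 - t² - N t⁴)^{1/(q+1)}`. -/
noncomputable def fN (N q t : ℝ) : ℝ :=
  (1 - t ^ 2 - N * t ^ 4) ^ ((1 : ℝ) / (q + 1))

/-- The weighted parallel section function of the body of revolution `L_N`:
`A_N(t) = c_n ∫₀^{f_N(t)} (t² + r²)^{p/2} r^{n-2} dr` for `|t| ≤ a_N`, where `c_n` is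
the surface area of the unit sphere `S^{n-2}` in `ℝ^{n-1}`. -/
noncomputable def AN (n : ℕ) (N q p a t : ℝ) : ℝ :=
  if |t| ≤ a then
    sphereArea (n - 1) *
      ∫ r in (0 : ℝ)..(fN N q t), (t ^ 2 + r ^ 2) ^ (p / 2) * r ^ ((n : ℝ) - 2)
  else 0

/-!
Substituting `r = f_N(t) s` and using that `(t² + r²)^{p/2} r^{n-2}` is homogeneous of
degree `q = p + n - 2` gives, near `t = 0`,
`A_N(t) = c_n f_N(t)^{q+1} K(t / f_N(t)) = c_n (1 - t² - N t⁴) K(t / f_N(t))`,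
where `K(τ) = ∫₀¹ (τ² + s²)^{p/2} s^{n-2} ds`. Since `p ≤ 0` and `q ≥ 2`, the integrand
of `K` and its `τ`-derivative are bounded by constants on `0 < s ≤ 1`, so `K` is
differentiable with `K'(τ) = p τ K₁(τ)` for the continuous function
`K₁(τ) = ∫₀¹ (τ² + s²)^{p/2-1} s^{n-2} ds`. Hence `K(0) = 1/(q+1)`, `K'(0) = 0` and
`K''(0) = p K₁(0) = p/(q-1)`. As `τ(t) = t / f_N(t)` has `τ(0) = 0` and `τ'(0) = 1`, the
chain and product rules give `A_N''(0) = c_n (K''(0) - 2 K(0))`.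
-/

open intervalIntegral Filter Topology Set Interval

theorem hasDerivAt_sub_mul_of_continuousAt {𝕜 : Type*} [NontriviallyNormedField 𝕜]
    {g : 𝕜 → 𝕜} {x : 𝕜} (hg : ContinuousAt g x) :
    HasDerivAt (fun y => (y - x) * g y) (g x) x := by
  rw [hasDerivAt_iff_tendsto_slope]
  refine (hg.tendsto.mono_left nhdsWithin_le_nhds).congr' ?_
  filter_upwards [self_mem_nhdsWithin] with y hy
  rw [slope_def_field, sub_self, zero_mul, sub_zero, mul_div_cancel_left₀ _ (sub_ne_zero.2 hy)]

theorem iteratedDeriv_two_mul_comp {u u' K K' τ : ℝ → ℝ} {x u'' K'' : ℝ}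
    (hu : ∀ t, HasDerivAt u (u' t) t) (hu' : HasDerivAt u' u'' x)
    (hK : ∀ y, HasDerivAt K (K' y) y) (hK' : HasDerivAt K' K'' (τ x))
    (hτ : ContDiffAt ℝ 2 τ x) :
    iteratedDeriv 2 (fun t => u t * K (τ t)) x =
      u'' * K (τ x) + 2 * u' x * K' (τ x) * deriv τ x
        + u x * (K'' * deriv τ x ^ 2 + K' (τ x) * deriv (deriv τ) x) := by
  have hτdiff : ∀ᶠ t in 𝓝 x, DifferentiableAt ℝ τ t :=
    (hτ.eventually (by simp)).mono fun t ht => ht.differentiableAt (by simp)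
  have hderiv : deriv (fun t => u t * K (τ t)) =ᶠ[𝓝 x]
      fun t => u' t * K (τ t) + u t * (K' (τ t) * deriv τ t) :=
    hτdiff.mono fun t ht => ((hu t).mul ((hK (τ t)).comp t ht.hasDerivAt)).deriv
  have hτ' : HasDerivAt τ (deriv τ x) x := hτdiff.self_of_nhds.hasDerivAt
  have hτ'' : HasDerivAt (deriv τ) (deriv (deriv τ) x) x :=
    ((hτ.derivWithin (m := 1) (by norm_num)).differentiableAt (by simp)).hasDerivAt
  rw [iteratedDeriv_succ, iteratedDeriv_one, hderiv.deriv_eq]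
  refine ((hu'.mul ((hK (τ x)).comp x hτ')).add
    ((hu x).mul ((hK'.comp x hτ').mul hτ''))).deriv.trans ?_
  simp only [Function.comp_apply, Pi.mul_apply]
  ring

noncomputable def radialIntegral (a b τ : ℝ) : ℝ :=
  ∫ s in (0 : ℝ)..1, (τ ^ 2 + s ^ 2) ^ a * s ^ b

theorem mem_Ioc_of_mem_uIoc_zero_one {s : ℝ} (hs : s ∈ Ι (0 : ℝ) 1) :
    s ∈ Ioc (0 : ℝ) 1 := by
  rwa [uIoc_of_le zero_le_one] at hs

theorem rpow_mul_rpow_le_one_of_sq_le {x s e b : ℝ} (hs : 0 < s) (hs₁ : s ≤ 1)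
    (hx : s ^ 2 ≤ x) (he : e ≤ 0) (heb : 0 ≤ 2 * e + b) : x ^ e * s ^ b ≤ 1 :=
  calc x ^ e * s ^ b ≤ (s ^ 2) ^ e * s ^ b := by
        gcongr ?_ * _
        exact Real.rpow_le_rpow_of_nonpos (by positivity) hx he
    _ = s ^ (2 * e + b) := by
        rw [← Real.rpow_natCast_mul hs.le, Real.rpow_add hs]; norm_num
    _ ≤ 1 := Real.rpow_le_one hs.le hs₁ heb

theorem abs_sq_add_sq_rpow_mul_rpow_le_one {τ s e b : ℝ} (hs : 0 < s) (hs₁ : s ≤ 1)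
    (he : e ≤ 0) (heb : 0 ≤ 2 * e + b) : |(τ ^ 2 + s ^ 2) ^ e * s ^ b| ≤ 1 := by
  rw [abs_of_nonneg (by positivity)]
  exact rpow_mul_rpow_le_one_of_sq_le hs hs₁ (le_add_of_nonneg_left (sq_nonneg τ)) he heb

theorem abs_mul_sq_add_sq_rpow_mul_rpow_le_one {τ s e b : ℝ} (hs : 0 < s) (hs₁ : s ≤ 1)
    (he : e ≤ 1 / 2) (heb : 1 ≤ 2 * e + b) :
    |τ * ((τ ^ 2 + s ^ 2) ^ (e - 1) * s ^ b)| ≤ 1 := by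
  set ψ := τ ^ 2 + s ^ 2
  have hψ : 0 < ψ := by positivity
  have hτ : |τ| ≤ ψ ^ (1 / 2 : ℝ) := by
    rw [← Real.sqrt_eq_rpow, ← Real.sqrt_sq_eq_abs]
    exact Real.sqrt_le_sqrt (le_add_of_nonneg_right (sq_nonneg s))
  calc |τ * (ψ ^ (e - 1) * s ^ b)| = |τ| * (ψ ^ (e - 1) * s ^ b) := by
        rw [abs_mul, abs_of_nonneg (a := ψ ^ (e - 1) * s ^ b) (by positivity)]
    _ ≤ ψ ^ (1 / 2 : ℝ) * (ψ ^ (e - 1) * s ^ b) := by gcongr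
    _ = ψ ^ (e - 1 / 2) * s ^ b := by rw [← mul_assoc, ← Real.rpow_add hψ]; congr 2; ring
    _ ≤ 1 := rpow_mul_rpow_le_one_of_sq_le hs hs₁ (le_add_of_nonneg_left (sq_nonneg τ))
        (by linarith) (by linarith)

theorem hasDerivAt_sq_add_sq_rpow_mul_rpow {s : ℝ} (a b τ : ℝ) (hs : s ≠ 0) :
    HasDerivAt (fun τ => (τ ^ 2 + s ^ 2) ^ a * s ^ b)
      (2 * a * τ * ((τ ^ 2 + s ^ 2) ^ (a - 1) * s ^ b)) τ := by
  have hψ : τ ^ 2 + s ^ 2 ≠ 0 := by positivity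
  refine ((((hasDerivAt_pow 2 τ).add_const (s ^ 2)).rpow_const (p := a) (Or.inl hψ)).mul_const
    (s ^ b)).congr_deriv ?_
  push_cast
  ring

theorem measurable_sq_add_sq_rpow_mul_rpow (a b τ : ℝ) :
    Measurable fun s : ℝ => (τ ^ 2 + s ^ 2) ^ a * s ^ b := by
  fun_prop

theorem continuous_radialIntegral {a b : ℝ} (ha : a ≤ 0) (hab : 0 ≤ 2 * a + b) :
    Continuous (radialIntegral a b) :=
  continuous_of_dominated_interval (bound := fun _ => 1)
    (fun τ => (measurable_sq_add_sq_rpow_mul_rpow a b τ).aestronglyMeasurable)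
    (fun _ => Eventually.of_forall fun _ hs =>
      abs_sq_add_sq_rpow_mul_rpow_le_one (mem_Ioc_of_mem_uIoc_zero_one hs).1
        (mem_Ioc_of_mem_uIoc_zero_one hs).2 ha hab)
    intervalIntegrable_const
    (Eventually.of_forall fun _ hs => continuous_iff_continuousAt.2 fun τ =>
      (hasDerivAt_sq_add_sq_rpow_mul_rpow a b τ
        (mem_Ioc_of_mem_uIoc_zero_one hs).1.ne').continuousAt)

theorem hasDerivAt_radialIntegral {a b : ℝ} (ha : a ≤ 0) (hab : 1 ≤ 2 * a + b) (τ : ℝ) :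
    HasDerivAt (radialIntegral a b) (2 * a * τ * radialIntegral (a - 1) b τ) τ := by
  have hint : IntervalIntegrable (fun s => (τ ^ 2 + s ^ 2) ^ a * s ^ b) volume 0 1 :=
    intervalIntegrable_const.mono_fun'
      (measurable_sq_add_sq_rpow_mul_rpow a b τ).aestronglyMeasurable
      ((ae_restrict_iff' measurableSet_uIoc).2 <| Eventually.of_forall fun s hs =>
        abs_sq_add_sq_rpow_mul_rpow_le_one (τ := τ) (mem_Ioc_of_mem_uIoc_zero_one hs).1
          (mem_Ioc_of_mem_uIoc_zero_one hs).2 ha (by linarith))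
  have hderiv := intervalIntegral.hasDerivAt_integral_of_dominated_loc_of_deriv_le
    (μ := volume) (a := 0) (b := 1)
    (F' := fun τ s => 2 * a * τ * ((τ ^ 2 + s ^ 2) ^ (a - 1) * s ^ b))
    (bound := fun _ => 2 * |a|) univ_mem
    (Eventually.of_forall fun τ => (measurable_sq_add_sq_rpow_mul_rpow a b τ).aestronglyMeasurable)
    hint ((measurable_sq_add_sq_rpow_mul_rpow (a - 1) b τ).const_mul _).aestronglyMeasurable
    (Eventually.of_forall fun s hs τ _ => ?_) intervalIntegrable_const
    (Eventually.of_forall fun s hs τ _ =>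
      hasDerivAt_sq_add_sq_rpow_mul_rpow a b τ (mem_Ioc_of_mem_uIoc_zero_one hs).1.ne')
  · rw [radialIntegral, ← intervalIntegral.integral_const_mul]
    exact hderiv.2
  · obtain ⟨hs₀, hs₁⟩ := mem_Ioc_of_mem_uIoc_zero_one hs
    calc ‖2 * a * τ * ((τ ^ 2 + s ^ 2) ^ (a - 1) * s ^ b)‖
        = 2 * |a| * |τ * ((τ ^ 2 + s ^ 2) ^ (a - 1) * s ^ b)| := by
          rw [Real.norm_eq_abs, mul_assoc, abs_mul, abs_mul, abs_two]
      _ ≤ 2 * |a| * 1 := by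
          gcongr
          exact abs_mul_sq_add_sq_rpow_mul_rpow_le_one hs₀ hs₁ (by linarith) hab
      _ = 2 * |a| := mul_one _

-- `radialIntegral (a - 1) b` need not be differentiable at `0`, but the factor `τ` makes
-- continuity enough.
theorem hasDerivAt_mul_radialIntegral_zero {a b : ℝ} (ha : a ≤ 1) (hab : 2 ≤ 2 * a + b) :
    HasDerivAt (fun τ => 2 * a * τ * radialIntegral (a - 1) b τ)
      (2 * a * radialIntegral (a - 1) b 0) 0 := by
  have h := hasDerivAt_sub_mul_of_continuousAt
    (((continuous_radialIntegral (a := a - 1) (b := b) (by linarith) (by linarith)).const_mul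
      (2 * a)).continuousAt (x := 0))
  rw [show (fun τ => 2 * a * τ * radialIntegral (a - 1) b τ) =
      fun τ => (τ - 0) * (2 * a * radialIntegral (a - 1) b τ) from funext fun τ => by ring]
  exact h

theorem radialIntegral_zero {a b : ℝ} (hab : -1 < 2 * a + b) :
    radialIntegral a b 0 = 1 / (2 * a + b + 1) := by
  have hpt : ∀ s ∈ Ι (0 : ℝ) 1, ((0 : ℝ) ^ 2 + s ^ 2) ^ a * s ^ b = s ^ (2 * a + b) := by
    intro s hs
    have hs₀ := (mem_Ioc_of_mem_uIoc_zero_one hs).1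
    rw [zero_pow two_ne_zero, zero_add, ← Real.rpow_natCast_mul hs₀.le, Real.rpow_add hs₀]
    norm_num
  rw [radialIntegral, integral_congr_ae (Eventually.of_forall hpt), integral_rpow (Or.inl hab),
    Real.one_rpow, Real.zero_rpow (by linarith)]
  ring

theorem intervalIntegral_sq_add_sq_rpow_mul_rpow (a b t : ℝ) {y : ℝ} (hy : 0 < y) :
    ∫ r in (0 : ℝ)..y, (t ^ 2 + r ^ 2) ^ a * r ^ b =
      y ^ (2 * a + b + 1) * radialIntegral a b (t / y) := by
  have hscale := smul_integral_comp_mul_left (a := 0) (b := 1)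
    (fun r => (t ^ 2 + r ^ 2) ^ a * r ^ b) y
  rw [mul_zero, mul_one, smul_eq_mul] at hscale
  rw [← hscale, radialIntegral, ← intervalIntegral.integral_const_mul,
    ← intervalIntegral.integral_const_mul]
  refine integral_congr fun s hs => ?_
  have hs₀ : 0 ≤ s := by rw [uIcc_of_le zero_le_one] at hs; exact hs.1
  have hsum : t ^ 2 + (y * s) ^ 2 = y ^ 2 * ((t / y) ^ 2 + s ^ 2) := by field_simp
  rw [hsum, Real.mul_rpow (by positivity) (by positivity), Real.mul_rpow hy.le hs₀,
    ← Real.rpow_natCast_mul hy.le, Real.rpow_add hy, Real.rpow_add hy, Real.rpow_one]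
  push_cast
  ring

theorem hasDerivAt_one_sub_sq_sub_mul_pow_four (N t : ℝ) :
    HasDerivAt (fun t => 1 - t ^ 2 - N * t ^ 4) (-2 * t - 4 * N * t ^ 3) t :=
  (((hasDerivAt_pow 2 t).const_sub 1).sub ((hasDerivAt_pow 4 t).const_mul N)).congr_deriv
    (by push_cast; ring)

theorem contDiffAt_div_fN_zero (N q : ℝ) : ContDiffAt ℝ 2 (fun t => t / fN N q t) 0 :=
  contDiffAt_id.div
    ((by fun_prop : ContDiffAt ℝ 2 (fun t : ℝ => 1 - t ^ 2 - N * t ^ 4) 0).rpow_const_of_ne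
      (by simp))
    (by simp [fN])

theorem hasDerivAt_div_fN_zero (N q : ℝ) : HasDerivAt (fun t => t / fN N q t) 1 0 := by
  have hf : HasDerivAt (fN N q) 0 0 :=
    ((hasDerivAt_one_sub_sq_sub_mul_pow_four N 0).rpow_const (p := 1 / (q + 1))
      (Or.inl (by simp))).congr_deriv (by simp)
  exact ((hasDerivAt_id 0).div hf (by simp [fN])).congr_deriv (by simp [fN])

theorem AN_eq_mul_radialIntegral {n : ℕ} {N q p a t : ℝ} (hp : p = -(n : ℝ) + q + 2)
    (hq : q + 1 ≠ 0) (ht : |t| ≤ a) (hpos : 0 < 1 - t ^ 2 - N * t ^ 4) :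
    AN n N q p a t = sphereArea (n - 1) * (1 - t ^ 2 - N * t ^ 4) *
      radialIntegral (p / 2) (n - 2) (t / fN N q t) := by
  have hexp : 2 * (p / 2) + ((n : ℝ) - 2) + 1 = q + 1 := by rw [hp]; ring
  have hf : fN N q t ^ (q + 1) = 1 - t ^ 2 - N * t ^ 4 := by
    rw [fN, one_div, Real.rpow_inv_rpow hpos.le hq]
  rw [AN, if_pos ht, intervalIntegral_sq_add_sq_rpow_mul_rpow (y := fN N q t) _ _ _
    (Real.rpow_pos_of_pos hpos _), hexp, hf, mul_assoc]

theorem AN_eventuallyEq_mul_radialIntegral {n : ℕ} {N q p a : ℝ} (hp : p = -(n : ℝ) + q + 2)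
    (hq : q + 1 ≠ 0) (ha : 0 < a) :
    AN n N q p a =ᶠ[𝓝 0] fun t => sphereArea (n - 1) * (1 - t ^ 2 - N * t ^ 4) *
      radialIntegral (p / 2) (n - 2) (t / fN N q t) := by
  filter_upwards [continuous_abs.continuousAt.eventually_lt continuousAt_const (by simpa using ha),
    continuousAt_const.eventually_lt (g := fun t : ℝ => 1 - t ^ 2 - N * t ^ 4) (by fun_prop)
      (by norm_num : (0 : ℝ) < 1 - 0 ^ 2 - N * 0 ^ 4)] with t ht hpos
  exact AN_eq_mul_radialIntegral hp hq ht.le hpos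

theorem AN_zero_and_secondDeriv_general
    (n : ℕ) (hn : 5 ≤ n) (q : ℝ) (hq₁ : 2 < q) (hq₂ : q ≤ 3)
    (p : ℝ) (hp : p = -(n : ℝ) + q + 2)
    (N : ℝ) (a : ℝ) (ha : 0 < a) :
    AN n N q p a 0 = sphereArea (n - 1) / ((n : ℝ) + p - 1) ∧
    iteratedDeriv 2 (AN n N q p a) 0 =
      sphereArea (n - 1) * (p / ((n : ℝ) + p - 3) - 2 / ((n : ℝ) + p - 1)) := by
  have hn' : (5 : ℝ) ≤ n := by exact_mod_cast hn
  have hp₀ : p / 2 ≤ 0 := by rw [hp]; linarith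
  have hnp₁ : (n : ℝ) + p - 1 = q + 1 := by rw [hp]; ring
  have hnp₃ : (n : ℝ) + p - 3 = q - 1 := by rw [hp]; ring
  have hR₀ : radialIntegral (p / 2) (n - 2) 0 = 1 / (q + 1) := by
    rw [radialIntegral_zero (by rw [hp]; linarith)]; congr 1; rw [hp]; ring
  have hR₁ : radialIntegral (p / 2 - 1) (n - 2) 0 = 1 / (q - 1) := by
    rw [radialIntegral_zero (by rw [hp]; linarith)]; congr 1; rw [hp]; ring
  have hAN := AN_eventuallyEq_mul_radialIntegral (N := N) hp (by linarith) ha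
  set c := sphereArea (n - 1)
  have hu := fun t => (hasDerivAt_one_sub_sq_sub_mul_pow_four N t).const_mul c
  have hu' : HasDerivAt (fun t => c * (-2 * t - 4 * N * t ^ 3)) (-2 * c) 0 :=
    ((((hasDerivAt_id 0).const_mul (-2)).sub ((hasDerivAt_pow 3 0).const_mul (4 * N))).const_mul
      c).congr_deriv (by simp; ring)
  have hK := hasDerivAt_radialIntegral (b := n - 2) hp₀ (by rw [hp]; linarith)
  have hK' : HasDerivAt (fun τ => 2 * (p / 2) * τ * radialIntegral (p / 2 - 1) (n - 2) τ)
      (2 * (p / 2) * radialIntegral (p / 2 - 1) (n - 2) 0) (0 / fN N q 0) := by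
    rw [zero_div]
    exact hasDerivAt_mul_radialIntegral_zero (by linarith) (by rw [hp]; linarith)
  refine ⟨?_, (hAN.iteratedDeriv_eq 2).trans
    ((iteratedDeriv_two_mul_comp hu hu' hK hK' (contDiffAt_div_fN_zero N q)).trans ?_)⟩
  · rw [hAN.eq_of_nhds]
    simp [hR₀, hnp₁, div_eq_mul_one_div c]
  · rw [(hasDerivAt_div_fN_zero N q).deriv, zero_div, hR₀, hR₁, hnp₁, hnp₃]
    field_simp
    ring

/-- The values `A_N(0) = c_n/(n+p-1)` and `A_N''(0) = c_n (p/(n+p-3) - 2/(n+p-1))`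
for the weighted parallel section function of the body of revolution `L_N`. -/
theorem AN_zero_and_secondDeriv
    (n : ℕ) (hn : 5 ≤ n) (q : ℝ) (hq₁ : 2 < q) (hq₂ : q ≤ 3)
    (p : ℝ) (hp : p = -(n : ℝ) + q + 2)
    (N : ℝ) (hN : 0 < N) (a : ℝ) (ha : 0 < a) (haroot : 1 - a ^ 2 - N * a ^ 4 = 0) :
    AN n N q p a 0 = sphereArea (n - 1) / ((n : ℝ) + p - 1) ∧
    iteratedDeriv 2 (AN n N q p a) 0 =
      sphereArea (n - 1) * (p / ((n : ℝ) + p - 3) - 2 / ((n : ℝ) + p - 1)) :=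
  AN_zero_and_secondDeriv_general n hn q hq₁ hq₂ p hp N a ha
end
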